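/- arXiv:2408.09737 — 3 statements merged into one kernel-verified Lean document; each statement's English description precedes it below -/
import Mathlib

section
/- Let λ = Σ_{i=0}^{mn-1} ξ^{(n-1)i} α^{i}*β^{n-1}, a right integral in the convolution algebra R* = (R_{mn}(q))*. Then for every f ∈ R* one has f*λ = f(g^{1-n})·λ, i.e., the distinguished grouplike element of R = R_{mn}(q) is g^{1-n} = g^{(m-1)n+1}. -/
open scoped TensorProduct

/-- The convolution product on the dual `R* = Hom_K(R, K)` of a coalgebra:
`(f * h)(a) = Σ f(a₍₁₎) h(a₍₂₎)`. -/
noncomputable def conv (K : Type*) {R : Type*} [CommRing K] [AddCommMonoid R]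
    [Module K R] [Coalgebra K R] (f h : R →ₗ[K] K) : R →ₗ[K] K :=
  LinearMap.mul' K K ∘ₗ TensorProduct.map f h ∘ₗ Coalgebra.comul

/-- Convolution powers in `R*`; the zeroth power is the unit `ε` of `R*`. -/
noncomputable def convPow (K : Type*) {R : Type*} [CommRing K] [AddCommMonoid R]
    [Module K R] [Coalgebra K R] (f : R →ₗ[K] K) : ℕ → (R →ₗ[K] K)
  | 0 => Coalgebra.counit
  | j + 1 => conv K f (convPow K f j)

/-- Gaussian binomial-type coefficients appearing in `Δ(xᵇ)`. -/
noncomputable def tc {K : Type*} [Field K] (q : K) : ℕ → ℕ → K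
  | 0, k => if k = 0 then 1 else 0
  | b + 1, k => q ^ k * tc q b k + if k = 0 then 0 else tc q b (k - 1)

lemma tc_zero {K : Type*} [Field K] (q : K) : ∀ b k : ℕ, b < k → tc q b k = 0 := by
  intro b
  induction b with
  | zero =>
    intro k hk
    have hk0 : k ≠ 0 := by omega
    simp [tc, hk0]
  | succ b ih =>
    intro k hk
    have h1 : tc q b k = 0 := ih k (by omega)
    have hk0 : k ≠ 0 := by omega
    have h2 : tc q b (k - 1) = 0 := ih (k - 1) (by omega)
    simp [tc, h1, h2, hk0]

lemma tc_diag {K : Type*} [Field K] (q : K) : ∀ b : ℕ, tc q b b = 1 := by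
  intro b
  induction b with
  | zero => simp [tc]
  | succ b ih => simp [tc, tc_zero q b (b + 1) (by omega), ih]

/-- The scalar `β^{*j}(gᵃ xʲ)` (a `q`-factorial). -/
noncomputable def fj {K : Type*} [Field K] (q : K) : ℕ → K
  | 0 => 1
  | j + 1 => tc q (j + 1) j * fj q j

lemma qpascal_sum {K M : Type*} [Field K] [AddCommMonoid M] [Module K M]
    (q : K) (b : ℕ) (T : ℕ → M) :
    ∑ k ∈ Finset.range (b + 1 + 1), tc q (b + 1) k • T k
      = ∑ k ∈ Finset.range (b + 1), (tc q b k * q ^ k) • T k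
        + ∑ k ∈ Finset.range (b + 1), tc q b k • T (k + 1) := by
  have h1 : ∀ k : ℕ, tc q (b + 1) k
      = q ^ k * tc q b k + (if k = 0 then 0 else tc q b (k - 1)) := fun k => rfl
  calc ∑ k ∈ Finset.range (b + 1 + 1), tc q (b + 1) k • T k
      = ∑ k ∈ Finset.range (b + 1 + 1),
          ((q ^ k * tc q b k) • T k + (if k = 0 then 0 else tc q b (k - 1)) • T k) :=
        Finset.sum_congr rfl fun k _ => by rw [h1 k, add_smul]
    _ = (∑ k ∈ Finset.range (b + 1 + 1), (q ^ k * tc q b k) • T k)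
        + ∑ k ∈ Finset.range (b + 1 + 1), (if k = 0 then 0 else tc q b (k - 1)) • T k :=
        Finset.sum_add_distrib
    _ = _ := by
        congr 1
        · rw [Finset.sum_range_succ, tc_zero q b (b + 1) (by omega)]
          simp only [mul_zero, zero_smul, add_zero]
          exact Finset.sum_congr rfl fun k _ => by rw [mul_comm]
        · rw [Finset.sum_range_succ']
          simp

/-- with `λ = Σ_{i=0}^{mn-1} ξ^{(n-1)i} α^i * β^{n-1}` the right
integral of `R* = (R_{mn}(q))*`, one has `f*λ = f(g^{1-n})·λ` for every `f ∈ R*`,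
i.e. the distinguished grouplike element of `R` is `g^{1-n} = g^{(m-1)n+1}`. -/
theorem radford_distinguished_grouplike (K : Type*) [Field K] [IsAlgClosed K]
    (m n : ℕ) (hm : 2 ≤ m) (hn : 1 ≤ n) (hchar : ¬ (ringChar K ∣ m * n))
    (q : K) (hq : IsPrimitiveRoot q n)
    (ξ : K) (hξ : IsPrimitiveRoot ξ (m * n)) (hξm : ξ ^ m = q)
    (R : Type*) [Ring R] [HopfAlgebra K R] (g x : R)
    (hgo : g ^ (m * n) = 1) (hxn : x ^ n = g ^ n - 1) (hxg : x * g = q • (g * x))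
    (B : Module.Basis (Fin (m * n) × Fin n) K R)
    (hB : ∀ p : Fin (m * n) × Fin n, B p = g ^ (p.1 : ℕ) * x ^ (p.2 : ℕ))
    (hcg : Coalgebra.comul (R := K) g = g ⊗ₜ[K] g)
    (hcx : Coalgebra.comul (R := K) x = x ⊗ₜ[K] g + 1 ⊗ₜ[K] x)
    (heg : Coalgebra.counit (R := K) g = (1 : K))
    (hex : Coalgebra.counit (R := K) x = (0 : K))
    (α β : R →ₗ[K] K)
    (hα : ∀ (i : Fin (m * n)) (j : Fin n),
      α (g ^ (i : ℕ) * x ^ (j : ℕ)) = if (j : ℕ) = 0 then ξ ^ (i : ℕ) else 0)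
    (hβ : ∀ (i : Fin (m * n)) (j : Fin n),
      β (g ^ (i : ℕ) * x ^ (j : ℕ)) = if (j : ℕ) = 1 then 1 else 0) :
    ∀ f : R →ₗ[K] K,
      conv K f (∑ i ∈ Finset.range (m * n),
          ξ ^ ((n - 1) * i) • conv K (convPow K α i) (convPow K β (n - 1))) =
        f (g ^ ((m - 1) * n + 1)) • (∑ i ∈ Finset.range (m * n),
          ξ ^ ((n - 1) * i) • conv K (convPow K α i) (convPow K β (n - 1))) := by
  intro f
  set Λ : R →ₗ[K] K := ∑ i ∈ Finset.range (m * n),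
      ξ ^ ((n - 1) * i) • conv K (convPow K α i) (convPow K β (n - 1)) with hΛdef
  have hmn : 0 < m * n := Nat.mul_pos (by omega) hn
  have hξmn : ξ ^ (m * n) = 1 := hξ.pow_eq_one
  have hg' : ∀ a : ℕ, g ^ a = g ^ (a % (m * n)) := by
    intro a
    conv_lhs => rw [← Nat.div_add_mod a (m * n)]
    rw [pow_add, pow_mul, hgo, one_pow, one_mul]
  have hξ' : ∀ a : ℕ, ξ ^ a = ξ ^ (a % (m * n)) := by
    intro a
    conv_lhs => rw [← Nat.div_add_mod a (m * n)]
    rw [pow_add, pow_mul, hξmn, one_pow, one_mul]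
  have hα' : ∀ a b : ℕ, b < n → α (g ^ a * x ^ b) = if b = 0 then ξ ^ a else 0 := by
    intro a b hb
    have h := hα ⟨a % (m * n), Nat.mod_lt _ hmn⟩ ⟨b, hb⟩
    simp only [] at h
    rw [hg' a, hξ' a]
    exact h
  have hβ' : ∀ a b : ℕ, b < n → β (g ^ a * x ^ b) = if b = 1 then 1 else 0 := by
    intro a b hb
    have h := hβ ⟨a % (m * n), Nat.mod_lt _ hmn⟩ ⟨b, hb⟩
    rw [hg' a]
    exact h
  have hε' : ∀ a b : ℕ, Coalgebra.counit (R := K) (g ^ a * x ^ b)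
      = if b = 0 then 1 else 0 := by
    intro a b
    rw [Bialgebra.counit_mul, Bialgebra.counit_pow, Bialgebra.counit_pow, heg, hex,
      one_pow, one_mul, zero_pow_eq]
  -- commutation of x-powers past g
  have hxkg : ∀ k : ℕ, x ^ k * g = q ^ k • (g * x ^ k) := by
    intro k
    induction k with
    | zero => simp
    | succ k ih =>
      calc x ^ (k + 1) * g = x ^ k * (x * g) := by rw [pow_succ, mul_assoc]
        _ = x ^ k * (q • (g * x)) := by rw [hxg]
        _ = q • (x ^ k * g * x) := by rw [mul_smul_comm, mul_assoc]
        _ = q • ((q ^ k • (g * x ^ k)) * x) := by rw [ih]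
        _ = (q * q ^ k) • (g * (x ^ k * x)) := by
            rw [smul_mul_assoc, smul_smul, mul_assoc]
        _ = q ^ (k + 1) • (g * x ^ (k + 1)) := by rw [← pow_succ', ← pow_succ]
  -- the comultiplication formula
  have hcom : ∀ b a : ℕ, Coalgebra.comul (R := K) (g ^ a * x ^ b)
      = ∑ k ∈ Finset.range (b + 1),
          tc q b k • ((g ^ a * x ^ (b - k)) ⊗ₜ[K] (g ^ (a + (b - k)) * x ^ k)) := by
    intro b
    induction b with
    | zero =>
      intro a
      rw [Finset.sum_range_one]
      simp only [pow_zero, mul_one, Nat.sub_zero, Nat.add_zero]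
      rw [Bialgebra.comul_pow, hcg, Algebra.TensorProduct.tmul_pow]
      simp [tc]
    | succ b ih =>
      intro a
      have h1 : g ^ a * x ^ (b + 1) = (g ^ a * x ^ b) * x := by rw [pow_succ, mul_assoc]
      rw [h1, Bialgebra.comul_mul, ih, hcx, Finset.sum_mul]
      have key : ∀ k ∈ Finset.range (b + 1),
          (tc q b k • ((g ^ a * x ^ (b - k)) ⊗ₜ[K] (g ^ (a + (b - k)) * x ^ k)))
              * (x ⊗ₜ[K] g + 1 ⊗ₜ[K] x)
          = (tc q b k * q ^ k) •
              ((g ^ a * x ^ (b + 1 - k)) ⊗ₜ[K] (g ^ (a + (b + 1 - k)) * x ^ k))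
            + tc q b k •
              ((g ^ a * x ^ (b + 1 - (k + 1))) ⊗ₜ[K]
                (g ^ (a + (b + 1 - (k + 1))) * x ^ (k + 1))) := by
        intro k hk
        have hkb : k ≤ b := Nat.lt_succ_iff.mp (Finset.mem_range.mp hk)
        have e1 : (g ^ a * x ^ (b - k)) * x = g ^ a * x ^ (b + 1 - k) := by
          rw [mul_assoc, ← pow_succ]
          congr 2
          omega
        have e2 : (g ^ (a + (b - k)) * x ^ k) * g
            = q ^ k • (g ^ (a + (b + 1 - k)) * x ^ k) := by
          rw [mul_assoc, hxkg k, mul_smul_comm, ← mul_assoc, ← pow_succ]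
          congr 3
          omega
        have e3 : (g ^ (a + (b - k)) * x ^ k) * x
            = g ^ (a + (b + 1 - (k + 1))) * x ^ (k + 1) := by
          rw [mul_assoc, ← pow_succ]
          congr 3
          omega
        rw [smul_mul_assoc, mul_add, Algebra.TensorProduct.tmul_mul_tmul,
          Algebra.TensorProduct.tmul_mul_tmul, mul_one, e1, e2, e3,
          TensorProduct.tmul_smul, smul_add, smul_smul,
          show b + 1 - (k + 1) = b - k by omega]
      rw [Finset.sum_congr rfl key, Finset.sum_add_distrib]
      exact (qpascal_sum q b (fun k =>
        (g ^ a * x ^ (b + 1 - k)) ⊗ₜ[K] (g ^ (a + (b + 1 - k)) * x ^ k))).symm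
  -- evaluation of convolutions on canonical elements
  have hconv : ∀ (f₁ h₁ : R →ₗ[K] K) (a b : ℕ), conv K f₁ h₁ (g ^ a * x ^ b)
      = ∑ k ∈ Finset.range (b + 1),
          tc q b k * (f₁ (g ^ a * x ^ (b - k)) * h₁ (g ^ (a + (b - k)) * x ^ k)) := by
    intro f₁ h₁ a b
    show (LinearMap.mul' K K) ((TensorProduct.map f₁ h₁) (Coalgebra.comul (g ^ a * x ^ b)))
      = _
    rw [hcom b a, map_sum, map_sum]
    apply Finset.sum_congr rfl
    intro k _
    rw [LinearMapClass.map_smul, LinearMapClass.map_smul, TensorProduct.map_tmul,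
      LinearMap.mul'_apply, smul_eq_mul]
  -- convolution powers of α
  have hαp : ∀ (i a b : ℕ), b < n →
      convPow K α i (g ^ a * x ^ b) = if b = 0 then ξ ^ (i * a) else 0 := by
    intro i
    induction i with
    | zero =>
      intro a b hb
      show Coalgebra.counit (g ^ a * x ^ b) = _
      rw [hε']
      simp
    | succ i ih =>
      intro a b hb
      show conv K α (convPow K α i) (g ^ a * x ^ b) = _
      rw [hconv]
      rcases Nat.eq_zero_or_pos b with rfl | hbpos
      · rw [Finset.sum_range_one, if_pos rfl, Nat.sub_zero, Nat.add_zero,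
          hα' a 0 hn, ih a 0 hn, if_pos rfl, if_pos rfl, tc_diag]
        rw [one_mul, ← pow_add, show a + i * a = (i + 1) * a by ring]
      · rw [if_neg (by omega)]
        apply Finset.sum_eq_zero
        intro k hk
        have hkb : k ≤ b := Nat.lt_succ_iff.mp (Finset.mem_range.mp hk)
        rw [hα' a (b - k) (by omega), ih _ k (by omega)]
        by_cases h0 : b - k = 0
        · rw [if_pos h0, if_neg (by omega)]
          ring
        · rw [if_neg h0]
          ring
  -- convolution powers of β
  have hβp : ∀ (j a b : ℕ), b < n →
      convPow K β j (g ^ a * x ^ b) = if b = j then fj q j else 0 := by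
    intro j
    induction j with
    | zero =>
      intro a b hb
      show Coalgebra.counit (g ^ a * x ^ b) = _
      rw [hε']
      simp [fj]
    | succ j ih =>
      intro a b hb
      show conv K β (convPow K β j) (g ^ a * x ^ b) = _
      rw [hconv]
      by_cases hbj : b = j + 1
      · subst hbj
        rw [if_pos rfl, Finset.sum_eq_single j]
        · have h1 : j + 1 - j = 1 := by omega
          rw [h1, hβ' _ 1 (by omega), ih _ j (by omega), if_pos rfl, if_pos rfl]
          show _ = fj q (j + 1)
          show _ = tc q (j + 1) j * fj q j
          ring
        · intro k hk hkj
          have hkb : k ≤ j + 1 := Nat.lt_succ_iff.mp (Finset.mem_range.mp hk)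
          rw [hβ' _ (j + 1 - k) (by omega), ih _ k (by omega)]
          by_cases h1 : j + 1 - k = 1
          · exact absurd (by omega : k = j) hkj
          · rw [if_neg h1]
            ring
        · intro h
          exact absurd (Finset.mem_range.mpr (by omega)) h
      · rw [if_neg hbj]
        apply Finset.sum_eq_zero
        intro k hk
        have hkb : k ≤ b := Nat.lt_succ_iff.mp (Finset.mem_range.mp hk)
        rw [hβ' _ (b - k) (by omega), ih _ k (by omega)]
        by_cases h1 : b - k = 1
        · by_cases h2 : k = j
          · exact absurd (by omega : b = j + 1) hbj
          · rw [if_neg h2]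
            ring
        · rw [if_neg h1]
          ring
  -- the building blocks of Λ
  have hγ : ∀ (i a b : ℕ), b < n →
      conv K (convPow K α i) (convPow K β (n - 1)) (g ^ a * x ^ b)
        = if b = n - 1 then ξ ^ (i * a) * fj q (n - 1) else 0 := by
    intro i a b hb
    rw [hconv]
    by_cases hbn : b = n - 1
    · rw [if_pos hbn, Finset.sum_eq_single b]
      · rw [Nat.sub_self, Nat.add_zero, hαp i a 0 (by omega), hβp (n - 1) a b hb,
          if_pos rfl, if_pos hbn, tc_diag]
        ring
      · intro k hk hkb'
        have hkb : k ≤ b := Nat.lt_succ_iff.mp (Finset.mem_range.mp hk)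
        rw [hαp i a (b - k) (by omega), hβp (n - 1) _ k (by omega)]
        by_cases h0 : b - k = 0
        · exact absurd (by omega : k = b) hkb'
        · rw [if_neg h0]
          ring
      · intro h
        exact absurd (Finset.mem_range.mpr (by omega)) h
    · rw [if_neg hbn]
      apply Finset.sum_eq_zero
      intro k hk
      have hkb : k ≤ b := Nat.lt_succ_iff.mp (Finset.mem_range.mp hk)
      rw [hαp i a (b - k) (by omega), hβp (n - 1) _ k (by omega)]
      by_cases h0 : b - k = 0
      · by_cases h1 : k = n - 1
        · exact absurd (by omega : b = n - 1) hbn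
        · rw [if_neg h1]
          ring
      · rw [if_neg h0]
        ring
  -- evaluation of Λ
  have hΛ : ∀ a b : ℕ, b < n → Λ (g ^ a * x ^ b)
      = if b = n - 1 then
          (∑ i ∈ Finset.range (m * n), (ξ ^ (n - 1 + a)) ^ i) * fj q (n - 1)
        else 0 := by
    intro a b hb
    rw [hΛdef, LinearMap.sum_apply]
    simp only [LinearMap.smul_apply, hγ _ a b hb, smul_eq_mul]
    by_cases hbn : b = n - 1
    · simp only [if_pos hbn]
      rw [Finset.sum_mul]
      apply Finset.sum_congr rfl
      intro i _
      rw [← mul_assoc, ← pow_add, ← pow_mul,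
        show (n - 1) * i + i * a = (n - 1 + a) * i by ring]
    · simp [if_neg hbn]
  -- final computation on basis elements
  refine B.ext fun p => ?_
  rw [hB p]
  set a : ℕ := (p.1 : ℕ) with ha
  set b : ℕ := (p.2 : ℕ) with hb'
  have hb : b < n := p.2.isLt
  rw [hconv f Λ a b, LinearMap.smul_apply, hΛ a b hb, smul_eq_mul]
  by_cases hbn : b = n - 1
  · rw [if_pos hbn, Finset.sum_eq_single b]
    · rw [Nat.sub_self, Nat.add_zero, hΛ a b hb, if_pos hbn, tc_diag, one_mul, pow_zero,
        mul_one]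
      by_cases hr : ξ ^ (n - 1 + a) = 1
      · have hdvd : m * n ∣ n - 1 + a := (hξ.pow_eq_one_iff_dvd _).mp hr
        obtain ⟨t, ht⟩ := hdvd
        have hmn1 : n - 1 + ((m - 1) * n + 1) = m * n := by
          rcases m with _ | m
          · omega
          · rcases n with _ | n
            · omega
            · simp only [Nat.succ_sub_one]
              ring
        have h1 : g ^ (n - 1) * g ^ a = 1 := by
          rw [← pow_add, ht, pow_mul, hgo, one_pow]
        have h2 : g ^ (n - 1) * g ^ ((m - 1) * n + 1) = 1 := by
          rw [← pow_add, hmn1, hgo]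
        have hga : g ^ a = g ^ ((m - 1) * n + 1) := by
          calc g ^ a = g ^ a * (g ^ (n - 1) * g ^ ((m - 1) * n + 1)) := by
                rw [h2, mul_one]
            _ = (g ^ (n - 1) * g ^ a) * g ^ ((m - 1) * n + 1) := by
                rw [← pow_add, ← pow_add, ← pow_add, ← pow_add]
                congr 1
                omega
            _ = 1 * g ^ ((m - 1) * n + 1) := by rw [h1]
            _ = g ^ ((m - 1) * n + 1) := one_mul _
        rw [hga]
      · have h3 : (ξ ^ (n - 1 + a)) ^ (m * n) = 1 := by
          rw [← pow_mul, mul_comm (n - 1 + a) (m * n), pow_mul, hξmn, one_pow]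
        have hS : (∑ i ∈ Finset.range (m * n), (ξ ^ (n - 1 + a)) ^ i) = 0 := by
          have h4 := geom_sum_mul (ξ ^ (n - 1 + a)) (m * n)
          rw [h3, sub_self] at h4
          rcases mul_eq_zero.mp h4 with h5 | h5
          · exact h5
          · exact absurd (sub_eq_zero.mp h5) hr
        rw [hS]
        ring
    · intro k hk hkb'
      have hkb : k ≤ b := Nat.lt_succ_iff.mp (Finset.mem_range.mp hk)
      rw [hΛ _ k (by omega), if_neg (by omega)]
      ring
    · intro h
      exact absurd (Finset.mem_range.mpr (by omega)) h
  · rw [if_neg hbn, mul_zero]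
    apply Finset.sum_eq_zero
    intro k hk
    have hkb : k ≤ b := Nat.lt_succ_iff.mp (Finset.mem_range.mp hk)
    rw [hΛ _ k (by omega), if_neg (by omega)]
    ring
end

section
/- The grouplike elements of the Radford Hopf algebra R = R_{mn}(q) are exactly the mn powers of g: an element a ∈ R satisfies a ≠ 0 and Δ(a) = a⊗a if and only if a = g^i for some 0 ≤ i ≤ mn-1. -/
open scoped TensorProduct

section RadfordAux

variable {K : Type*} [Field K] {R : Type*} [Ring R] [Algebra K R]

/-- Span of "low degree" pure tensors used in the Radford grouplike argument. -/
def radfordSpan (K : Type*) [Field K] {R : Type*} [Ring R] [Algebra K R]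
    (g x : R) (n J : ℕ) : Submodule K (R ⊗[K] R) :=
  Submodule.span K {t | ∃ a b c d : ℕ, b + d ≤ J ∧ b < n ∧ d < n ∧
    t = (g ^ a * x ^ b) ⊗ₜ[K] (g ^ c * x ^ d)}

lemma mem_radfordSpan_gen (g x : R) {n J : ℕ} (a : ℕ) {b : ℕ} (c : ℕ) {d : ℕ}
    (h : b + d ≤ J) (hb : b < n) (hd : d < n) :
    (g ^ a * x ^ b) ⊗ₜ[K] (g ^ c * x ^ d) ∈ radfordSpan K g x n J :=
  Submodule.subset_span ⟨a, b, c, d, h, hb, hd, rfl⟩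

lemma radfordSpan_mono (g x : R) {n J J' : ℕ} (h : J ≤ J') :
    radfordSpan K g x n J ≤ radfordSpan K g x n J' :=
  Submodule.span_mono fun _t ⟨a, b, c, d, h1, h2, h3, h4⟩ =>
    ⟨a, b, c, d, h1.trans h, h2, h3, h4⟩

lemma xpow_mul_g {g x : R} {q : K} (hxg : x * g = q • (g * x)) (d : ℕ) :
    x ^ d * g = q ^ d • (g * x ^ d) := by
  induction d with
  | zero => simp
  | succ d ih =>
    rw [pow_succ, mul_assoc, hxg, mul_smul_comm, ← mul_assoc, ih, smul_mul_assoc,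
      smul_smul, mul_assoc, ← pow_succ, ← pow_succ']

lemma radfordSpan_mul_step {g x : R} {n : ℕ} (hn : 0 < n) {q : K}
    (hxg : x * g = q • (g * x)) (hxn : x ^ n = g ^ n - 1) {J : ℕ} {t : R ⊗[K] R}
    (ht : t ∈ radfordSpan K g x n J) :
    t * (x ⊗ₜ[K] g + 1 ⊗ₜ[K] x) ∈ radfordSpan K g x n (J + 1) := by
  have hxsplit : ∀ (a b : ℕ), b + 1 = n →
      g ^ a * x ^ (b + 1) = g ^ (a + n) * x ^ 0 - g ^ a * x ^ 0 := by
    intro a b hbn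
    rw [hbn, hxn, pow_zero, mul_one, mul_one, mul_sub, mul_one, ← pow_add]
  induction ht using Submodule.span_induction with
  | mem t h =>
    obtain ⟨a, b, c, d, hbd, hb, hd, rfl⟩ := h
    rw [mul_add, Algebra.TensorProduct.tmul_mul_tmul, Algebra.TensorProduct.tmul_mul_tmul]
    apply Submodule.add_mem
    · have h1 : g ^ a * x ^ b * x = g ^ a * x ^ (b + 1) := by rw [mul_assoc, ← pow_succ]
      have h2 : g ^ c * x ^ d * g = q ^ d • (g ^ (c + 1) * x ^ d) := by
        rw [mul_assoc, xpow_mul_g hxg, mul_smul_comm, ← mul_assoc, ← pow_succ]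
      rw [h1, h2, TensorProduct.tmul_smul]
      apply Submodule.smul_mem
      rcases Nat.lt_or_ge (b + 1) n with hb1 | hb1
      · exact mem_radfordSpan_gen g x a (c + 1) (by omega) hb1 hd
      · have hbn : b + 1 = n := le_antisymm hb hb1
        rw [hxsplit a b hbn, TensorProduct.sub_tmul]
        exact Submodule.sub_mem _
          (mem_radfordSpan_gen g x (a + n) (c + 1) (by omega) hn hd)
          (mem_radfordSpan_gen g x a (c + 1) (by omega) hn hd)
    · have h1 : g ^ c * x ^ d * x = g ^ c * x ^ (d + 1) := by rw [mul_assoc, ← pow_succ]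
      rw [mul_one, h1]
      rcases Nat.lt_or_ge (d + 1) n with hd1 | hd1
      · exact mem_radfordSpan_gen g x a c (by omega) hb hd1
      · have hdn : d + 1 = n := le_antisymm hd hd1
        rw [hxsplit c d hdn, TensorProduct.tmul_sub]
        exact Submodule.sub_mem _
          (mem_radfordSpan_gen g x a (c + n) (by omega) hb hn)
          (mem_radfordSpan_gen g x a c (by omega) hb hn)
  | zero => simp
  | add u v _ _ hu hv => rw [add_mul]; exact Submodule.add_mem _ hu hv
  | smul s u _ hu => rw [smul_mul_assoc]; exact Submodule.smul_mem _ _ hu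

lemma radfordSpan_gmul {g x : R} {n J : ℕ} (i : ℕ) {t : R ⊗[K] R}
    (ht : t ∈ radfordSpan K g x n J) :
    ((g ^ i) ⊗ₜ[K] (g ^ i)) * t ∈ radfordSpan K g x n J := by
  induction ht using Submodule.span_induction with
  | mem t h =>
    obtain ⟨a, b, c, d, hbd, hb, hd, rfl⟩ := h
    rw [Algebra.TensorProduct.tmul_mul_tmul, ← mul_assoc, ← pow_add, ← mul_assoc, ← pow_add]
    exact mem_radfordSpan_gen g x (i + a) (i + c) hbd hb hd
  | zero => simp
  | add u v _ _ hu hv => rw [mul_add]; exact Submodule.add_mem _ hu hv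
  | smul s u _ hu => rw [mul_smul_comm]; exact Submodule.smul_mem _ _ hu

end RadfordAux

set_option maxHeartbeats 2000000 in
/-- the grouplike elements of the Radford Hopf algebra `R = R_{mn}(q)`
are exactly the `mn` powers of `g`: an element `a ∈ R` satisfies `a ≠ 0` and
`Δ(a) = a ⊗ a` if and only if `a = g^i` for some `0 ≤ i ≤ mn-1`. -/
theorem radford_grouplikes (K : Type*) [Field K] [IsAlgClosed K]
    (m n : ℕ) (hm : 2 ≤ m) (hn : 1 ≤ n) (hchar : ¬ (ringChar K ∣ m * n))
    (q : K) (hq : IsPrimitiveRoot q n)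
    (R : Type*) [Ring R] [HopfAlgebra K R] (g x : R)
    (hgo : g ^ (m * n) = 1) (hxn : x ^ n = g ^ n - 1) (hxg : x * g = q • (g * x))
    (B : Module.Basis (Fin (m * n) × Fin n) K R)
    (hB : ∀ p : Fin (m * n) × Fin n, B p = g ^ (p.1 : ℕ) * x ^ (p.2 : ℕ))
    (hcg : Coalgebra.comul (R := K) g = g ⊗ₜ[K] g)
    (hcx : Coalgebra.comul (R := K) x = x ⊗ₜ[K] g + 1 ⊗ₜ[K] x)
    (heg : Coalgebra.counit (R := K) g = (1 : K))
    (hex : Coalgebra.counit (R := K) x = (0 : K)) :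
    ∀ a : R, (a ≠ 0 ∧ Coalgebra.comul (R := K) a = a ⊗ₜ[K] a) ↔
      ∃ i : Fin (m * n), a = g ^ (i : ℕ) := by
  classical
  have hn0 : 0 < n := hn
  have hN0 : 0 < m * n := Nat.mul_pos (by omega) hn0
  haveI : Nontrivial R := nontrivial_of_ne (B (⟨0, hN0⟩, ⟨0, hn0⟩)) 0 (B.ne_zero _)
  have hgmod : ∀ a : ℕ, g ^ a = g ^ (a % (m * n)) := by
    intro a
    conv_lhs => rw [← Nat.div_add_mod a (m * n)]
    rw [pow_add, pow_mul, hgo, one_pow, one_mul]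
  have hcgp : ∀ i : ℕ, Coalgebra.comul (R := K) (g ^ i) = (g ^ i) ⊗ₜ[K] (g ^ i) := by
    intro i
    rw [Bialgebra.comul_pow, hcg, Algebra.TensorProduct.tmul_pow]
  have hcxp : ∀ J : ℕ, Coalgebra.comul (R := K) (x ^ J) ∈ radfordSpan K g x n J := by
    intro J
    induction J with
    | zero =>
      rw [pow_zero, Bialgebra.comul_one, Algebra.TensorProduct.one_def]
      have h1 : (1 : R) ⊗ₜ[K] (1 : R) = (g ^ 0 * x ^ 0) ⊗ₜ[K] (g ^ 0 * x ^ 0) := by simp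
      rw [h1]
      exact mem_radfordSpan_gen g x 0 0 (by omega) hn0 hn0
    | succ J ih =>
      rw [pow_succ, Bialgebra.comul_mul, hcx]
      exact radfordSpan_mul_step hn0 hxg hxn ih
  have hcB : ∀ p : Fin (m * n) × Fin n,
      Coalgebra.comul (R := K) (B p) ∈ radfordSpan K g x n (p.2 : ℕ) := by
    intro p
    rw [hB, Bialgebra.comul_mul, hcgp]
    exact radfordSpan_gmul _ (hcxp _)
  set F := B.tensorProduct B with hF
  have hcoord : ∀ (J : ℕ) (t : R ⊗[K] R), t ∈ radfordSpan K g x n J →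
      ∀ idx : (Fin (m * n) × Fin n) × (Fin (m * n) × Fin n),
        J < (idx.1.2 : ℕ) + (idx.2.2 : ℕ) → F.repr t idx = 0 := by
    intro J t ht
    induction ht using Submodule.span_induction with
    | mem t h =>
      obtain ⟨a, b, c, d, hbd, hb, hd, rfl⟩ := h
      rintro ⟨⟨i, k⟩, ⟨i', d'⟩⟩ hidx
      have e1 : g ^ a * x ^ b = B (⟨a % (m * n), Nat.mod_lt a hN0⟩, ⟨b, hb⟩) := by
        rw [hB, hgmod a]
      have e2 : g ^ c * x ^ d = B (⟨c % (m * n), Nat.mod_lt c hN0⟩, ⟨d, hd⟩) := by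
        rw [hB, hgmod c]
      rw [e1, e2, Module.Basis.tensorProduct_repr_tmul_apply, Module.Basis.repr_self, Module.Basis.repr_self,
        Finsupp.single_apply, Finsupp.single_apply]
      have hne : (⟨b, hb⟩ : Fin n) ≠ k ∨ (⟨d, hd⟩ : Fin n) ≠ d' := by
        by_contra hcon
        push_neg at hcon
        obtain ⟨h1, h2⟩ := hcon
        have hbk : b = (k : ℕ) := congrArg Fin.val h1
        have hdd : d = (d' : ℕ) := congrArg Fin.val h2
        simp only at hidx
        omega
      rcases hne with h | h
      · have hne' : ((⟨a % (m * n), Nat.mod_lt a hN0⟩, ⟨b, hb⟩) : Fin (m * n) × Fin n)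
            ≠ (i, k) := fun he => h (congrArg Prod.snd he)
        rw [if_neg hne', smul_zero]
      · have hne' : ((⟨c % (m * n), Nat.mod_lt c hN0⟩, ⟨d, hd⟩) : Fin (m * n) × Fin n)
            ≠ (i', d') := fun he => h (congrArg Prod.snd he)
        rw [if_neg hne', zero_smul]
    | zero => intro idx _; simp
    | add u v _ _ hu hv =>
      intro idx h
      rw [map_add, Finsupp.add_apply, hu idx h, hv idx h, add_zero]
    | smul s u _ hu =>
      intro idx h
      rw [map_smul, Finsupp.smul_apply, hu idx h, smul_zero]
  set z : Fin n := ⟨0, hn0⟩ with hz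
  have hBg : ∀ i : Fin (m * n), B (i, z) = g ^ (i : ℕ) := by
    intro i; rw [hB]; simp [hz]
  intro a
  constructor
  · rintro ⟨ha0, hΔ⟩
    set c := B.repr a with hc
    have hsum : ∑ p : Fin (m * n) × Fin n, c p • B p = a := B.sum_repr a
    have hra : c ≠ 0 := fun h0 => ha0 (B.repr.map_eq_zero_iff.mp (hc ▸ h0))
    have hTne : (c.support.image fun p => (p.2 : ℕ)).Nonempty :=
      (Finsupp.support_nonempty_iff.mpr hra).image _
    obtain ⟨j, hjp', hle⟩ : ∃ j : ℕ, (∃ p : Fin (m * n) × Fin n, c p ≠ 0 ∧ (p.2 : ℕ) = j) ∧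
        (∀ p : Fin (m * n) × Fin n, c p ≠ 0 → (p.2 : ℕ) ≤ j) := by
      refine ⟨Finset.max' (c.support.image fun p => (p.2 : ℕ)) hTne, ?_, ?_⟩
      · obtain ⟨p, hpT, hpv⟩ := Finset.mem_image.mp (Finset.max'_mem _ hTne)
        exact ⟨p, Finsupp.mem_support_iff.mp hpT, hpv⟩
      · intro p hp
        exact Finset.le_max' (c.support.image fun p => (p.2 : ℕ)) _ (Finset.mem_image_of_mem _ (Finsupp.mem_support_iff.mpr hp))
    obtain ⟨p', hp'ne, hp'⟩ := hjp'
    have hΔmem : Coalgebra.comul (R := K) a ∈ radfordSpan K g x n j := by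
      rw [← hsum, map_sum]
      apply Submodule.sum_mem
      intro p _
      rw [map_smul]
      by_cases hp : c p = 0
      · rw [hp, zero_smul]; exact Submodule.zero_mem _
      · exact Submodule.smul_mem _ _ (radfordSpan_mono g x (hle p hp) (hcB p))
    have hj0 : j = 0 := by
      by_contra hjne
      have hjpos : 0 < j := Nat.pos_of_ne_zero hjne
      have h0 := hcoord j _ hΔmem (p', p')
        (by show j < (p'.2 : ℕ) + (p'.2 : ℕ); omega)
      rw [hΔ, Module.Basis.tensorProduct_repr_tmul_apply, smul_eq_mul] at h0
      exact hp'ne (mul_self_eq_zero.mp h0)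
    have hsnd : ∀ p : Fin (m * n) × Fin n, c p ≠ 0 → p.2 = z := by
      intro p hp
      have h1 := hle p hp
      rw [hj0] at h1
      have hz0 : (z : ℕ) = 0 := rfl
      exact Fin.ext (by omega)
    have hsum2 : a = ∑ i : Fin (m * n), c (i, z) • g ^ (i : ℕ) := by
      rw [← hsum, Fintype.sum_prod_type]
      apply Finset.sum_congr rfl
      intro i _
      rw [Finset.sum_eq_single z]
      · rw [hBg]
      · intro j' _ hj'
        have hcz : c (i, j') = 0 := by
          by_contra hcc
          exact hj' (hsnd _ hcc)
        rw [hcz, zero_smul]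
      · intro h; exact absurd (Finset.mem_univ z) h
    have hΔsum : Coalgebra.comul (R := K) a
        = ∑ i : Fin (m * n), c (i, z) • F ((i, z), (i, z)) := by
      conv_lhs => rw [hsum2]
      rw [map_sum]
      apply Finset.sum_congr rfl
      intro i _
      rw [map_smul, hcgp, hF, Module.Basis.tensorProduct_apply, hBg]
    have key : ∀ i i' : Fin (m * n),
        c (i', z) * c (i, z) = if i = i' then c (i, z) else 0 := by
      intro i i'
      have h1 : F.repr (Coalgebra.comul (R := K) a) ((i, z), (i', z))
          = c (i', z) * c (i, z) := by
        rw [hΔ, Module.Basis.tensorProduct_repr_tmul_apply, smul_eq_mul]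
      rw [← h1, hΔsum, map_sum, Finset.sum_apply']
      have hterm : ∀ i'' : Fin (m * n),
          (F.repr (c (i'', z) • F ((i'', z), (i'', z)))) ((i, z), (i', z))
            = if i'' = i ∧ i'' = i' then c (i'', z) else 0 := by
        intro i''
        rw [map_smul, Module.Basis.repr_self, Finsupp.smul_apply, Finsupp.single_apply]
        have : ((((i'', z), (i'', z)) : (Fin (m * n) × Fin n) × (Fin (m * n) × Fin n))
            = ((i, z), (i', z))) ↔ (i'' = i ∧ i'' = i') := by
          simp [Prod.ext_iff]
        rw [if_congr this rfl rfl]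
        by_cases hcase : i'' = i ∧ i'' = i'
        · rw [if_pos hcase, if_pos hcase, smul_eq_mul, mul_one]
        · rw [if_neg hcase, if_neg hcase, smul_zero]
      rw [Finset.sum_congr rfl fun i'' _ => hterm i'']
      by_cases hii : i = i'
      · subst hii
        rw [if_pos rfl]
        have hsimp : ∀ i'' : Fin (m * n),
            (if i'' = i ∧ i'' = i then c (i'', z) else 0) = if i'' = i then c (i'', z) else 0 := by
          intro i''; by_cases h : i'' = i <;> simp [h]
        rw [Finset.sum_congr rfl fun i'' _ => hsimp i'',
          Finset.sum_ite_eq' Finset.univ i (fun i'' => c (i'', z))]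
        simp
      · rw [if_neg hii]
        apply Finset.sum_eq_zero
        intro b _
        exact if_neg fun h => hii (h.1.symm.trans h.2)
    have hpz : p'.2 = z := hsnd p' hp'ne
    have hcp' : c (p'.1, z) ≠ 0 := by
      rw [← hpz]
      simpa using hp'ne
    have hc1 : c (p'.1, z) = 1 := by
      have h11 : c (p'.1, z) * c (p'.1, z) = c (p'.1, z) := by
        simpa using key p'.1 p'.1
      exact mul_left_cancel₀ hcp' (by rw [h11, mul_one])
    refine ⟨p'.1, ?_⟩
    rw [hsum2, Finset.sum_eq_single p'.1]
    · rw [hc1, one_smul]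
    · intro i _ hi
      have hzero : c (i, z) = 0 := by
        have hk := key i p'.1
        rw [if_neg hi] at hk
        exact (mul_eq_zero.mp hk).resolve_left hcp'
      rw [hzero, zero_smul]
    · intro h; exact absurd (Finset.mem_univ _) h
  · rintro ⟨i, rfl⟩
    refine ⟨?_, ?_⟩
    · have h1 : g ^ (i : ℕ) * g ^ (m * n - (i : ℕ)) = 1 := by
        rw [← pow_add, Nat.add_sub_cancel' i.isLt.le, hgo]
      have h2 : g ^ (m * n - (i : ℕ)) * g ^ (i : ℕ) = 1 := by
        rw [← pow_add, Nat.sub_add_cancel i.isLt.le, hgo]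
      have hu : IsUnit (g ^ (i : ℕ)) := ⟨⟨_, _, h1, h2⟩, rfl⟩
      exact hu.ne_zero
    · exact hcgp _
end

section
/- Assume n ≥ 2. The k-algebra homomorphisms from the Radford Hopf algebra R = R_{mn}(q) to k are exactly the n characters χ_t, 0 ≤ t ≤ n-1, determined by χ_t(g) = q^t and χ_t(x) = 0. In particular, the group of grouplike elements of R* is cyclic of order n, generated by the character g ↦ q, x ↦ 0. -/
open scoped TensorProduct

/-- `n ≥ 2`: the `K`-algebra homomorphisms `R_{mn}(q) → K` are
exactly the `n` characters `χ_t` (`0 ≤ t ≤ n-1`) with `χ_t(g) = q^t`, `χ_t(x) = 0`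
(each such character exists, every character is of this form, and a character is
determined by its values on `g` and `x`); moreover the group of grouplike elements
of `R*` (characters under convolution) is cyclic of order `n`, generated by the
character `χ₁ : g ↦ q, x ↦ 0`: every character is `χ₁^t` for a unique `t` with
`0 ≤ t ≤ n-1`. -/
theorem radford_characters (K : Type*) [Field K] [IsAlgClosed K]
    (m n : ℕ) (hm : 2 ≤ m) (hn : 2 ≤ n) (hchar : ¬ (ringChar K ∣ m * n))
    (q : K) (hq : IsPrimitiveRoot q n)
    (R : Type*) [Ring R] [HopfAlgebra K R] (g x : R)
    (hgo : g ^ (m * n) = 1) (hxn : x ^ n = g ^ n - 1) (hxg : x * g = q • (g * x))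
    (B : Module.Basis (Fin (m * n) × Fin n) K R)
    (hB : ∀ p : Fin (m * n) × Fin n, B p = g ^ (p.1 : ℕ) * x ^ (p.2 : ℕ))
    (hcg : Coalgebra.comul (R := K) g = g ⊗ₜ[K] g)
    (hcx : Coalgebra.comul (R := K) x = x ⊗ₜ[K] g + 1 ⊗ₜ[K] x)
    (heg : Coalgebra.counit (R := K) g = (1 : K))
    (hex : Coalgebra.counit (R := K) x = (0 : K)) :
    (∀ t : Fin n, ∃ χ : R →ₐ[K] K, χ g = q ^ (t : ℕ) ∧ χ x = 0) ∧
    (∀ χ : R →ₐ[K] K, ∃ t : Fin n, χ g = q ^ (t : ℕ) ∧ χ x = 0) ∧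
    (∀ χ χ' : R →ₐ[K] K, χ g = χ' g → χ x = χ' x → χ = χ') ∧
    (∃ χ₁ : R →ₐ[K] K, χ₁ g = q ∧ χ₁ x = 0 ∧
      ∀ χ : R →ₐ[K] K, ∃! t : Fin n,
        (χ : R →ₗ[K] K) = convPow K (χ₁ : R →ₗ[K] K) (t : ℕ)) := by
  have h0n : 0 < n := lt_of_lt_of_le two_pos hn
  have h0mn : 0 < m * n := Nat.mul_pos (lt_of_lt_of_le two_pos hm) h0n
  haveI : NeZero n := ⟨h0n.ne'⟩
  have hqn : q ^ n = 1 := hq.pow_eq_one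
  -- commutation lemmas
  have hxgj : ∀ j : ℕ, x ^ j * g = (q ^ j) • (g * x ^ j) := by
    intro j
    induction j with
    | zero => simp
    | succ j ih =>
      rw [pow_succ, mul_assoc, hxg, mul_smul_comm, ← mul_assoc, ih, smul_mul_assoc,
        smul_smul, mul_assoc, ← pow_succ']
  have hxgi : ∀ j i : ℕ, x ^ j * g ^ i = (q ^ (j * i)) • (g ^ i * x ^ j) := by
    intro j i
    induction i with
    | zero => simp
    | succ i ih =>
      rw [pow_succ, ← mul_assoc, ih, smul_mul_assoc, mul_assoc, hxgj, mul_smul_comm,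
        smul_smul, ← pow_add, ← mul_assoc, ← pow_succ, Nat.mul_succ]
  have hcomn : ∀ j : ℕ, x ^ j * g ^ n = g ^ n * x ^ j := by
    intro j
    rw [hxgi, mul_comm j n, pow_mul, hqn, one_pow, one_smul]
  have hprod : ∀ i j i' j' : ℕ,
      (g ^ i * x ^ j) * (g ^ i' * x ^ j') = (q ^ (j * i')) • (g ^ (i + i') * x ^ (j + j')) := by
    intro i j i' j'
    calc (g ^ i * x ^ j) * (g ^ i' * x ^ j')
        = g ^ i * (x ^ j * g ^ i') * x ^ j' := by rw [mul_assoc, mul_assoc, mul_assoc]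
      _ = (q ^ (j * i')) • (g ^ (i + i') * x ^ (j + j')) := by
          rw [hxgi, mul_smul_comm, smul_mul_assoc, pow_add, pow_add, ← mul_assoc, ← mul_assoc]
  have hgred : ∀ a : ℕ, g ^ a = g ^ (a % (m * n)) := by
    intro a
    conv_lhs => rw [← Nat.mod_add_div a (m * n)]
    rw [pow_add, pow_mul, hgo, one_pow, mul_one]
  -- existence of characters
  have hexists : ∀ l : K, l ^ n = 1 → ∃ χ : R →ₐ[K] K, χ g = l ∧ χ x = 0 := by
    intro l hl
    set φ : R →ₗ[K] K :=
      B.constr K (fun p => if (p.2 : ℕ) = 0 then l ^ (p.1 : ℕ) else 0) with hφdef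
    have hφB : ∀ p : Fin (m * n) × Fin n,
        φ (B p) = if (p.2 : ℕ) = 0 then l ^ (p.1 : ℕ) else 0 := fun p => B.constr_basis _ _ _
    have hlmn1 : l ^ (m * n) = 1 := by rw [mul_comm, pow_mul, hl, one_pow]
    have hlred : ∀ a : ℕ, l ^ a = l ^ (a % (m * n)) := by
      intro a
      conv_lhs => rw [← Nat.mod_add_div a (m * n)]
      rw [pow_add, pow_mul, hlmn1, one_pow, mul_one]
    have key : ∀ b a : ℕ, φ (g ^ a * x ^ b) = if b = 0 then l ^ a else 0 := by
      intro b
      induction b using Nat.strong_induction_on with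
      | _ b ih =>
        intro a
        by_cases hb : b < n
        · have h1 : g ^ a * x ^ b = B (⟨a % (m * n), Nat.mod_lt _ h0mn⟩, ⟨b, hb⟩) := by
            rw [hB]
            simp only [hgred a]
          rw [h1, hφB]
          simp only []
          split_ifs <;> simp [← hlred]
        · push_neg at hb
          have hbn : b - n < b := Nat.sub_lt (lt_of_lt_of_le h0n hb) h0n
          have hx' : x ^ b = x ^ (b - n) * (g ^ n - 1) := by
            rw [← hxn, ← pow_add, Nat.sub_add_cancel hb]
          have h2 : g ^ a * x ^ b = g ^ (a + n) * x ^ (b - n) - g ^ a * x ^ (b - n) := by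
            rw [hx', mul_sub, mul_one, mul_sub, hcomn, ← mul_assoc, ← pow_add]
          rw [h2, map_sub, ih _ hbn, ih _ hbn]
          have hbne : b ≠ 0 := by omega
          simp only [hbne, if_false]
          by_cases h3 : b - n = 0
          · simp [h3, pow_add, hl]
          · simp [h3]
    have hbm : ∀ p p' : Fin (m * n) × Fin n, φ (B p * B p') = φ (B p) * φ (B p') := by
      intro p p'
      rw [hB p, hB p', hprod, map_smul, smul_eq_mul, key, key, key]
      by_cases h1 : (p.2 : ℕ) = 0 <;> by_cases h2 : (p'.2 : ℕ) = 0 <;>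
        simp [h1, h2, pow_add, Nat.add_eq_zero]
    have hone : φ 1 = 1 := by
      have := key 0 0
      simpa using this
    have hmulL : ∀ p (b : R), φ (B p * b) = φ (B p) * φ b := by
      intro p b
      have h := B.ext (f₁ := φ ∘ₗ LinearMap.mulLeft K (B p)) (f₂ := φ (B p) • φ) (fun p' => by
        simp only [LinearMap.comp_apply, LinearMap.mulLeft_apply, LinearMap.smul_apply,
          smul_eq_mul]
        exact hbm p p')
      have := congrArg (fun f : R →ₗ[K] K => f b) h
      simpa using this
    have hmul : ∀ a b : R, φ (a * b) = φ a * φ b := by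
      intro a b
      have h := B.ext (f₁ := φ ∘ₗ LinearMap.mulRight K b) (f₂ := φ b • φ) (fun p => by
        simp only [LinearMap.comp_apply, LinearMap.mulRight_apply, LinearMap.smul_apply,
          smul_eq_mul]
        rw [hmulL p b, mul_comm])
      have h2 := congrArg (fun f : R →ₗ[K] K => f a) h
      simp only [LinearMap.comp_apply, LinearMap.mulRight_apply, LinearMap.smul_apply,
        smul_eq_mul] at h2
      rw [h2, mul_comm]
    refine ⟨AlgHom.ofLinearMap φ hone hmul, ?_, ?_⟩
    · have := key 0 1
      simpa using this
    · have := key 1 0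
      simpa using this
  -- characters are determined by values on g and x
  have hdet : ∀ χ χ' : R →ₐ[K] K, χ g = χ' g → χ x = χ' x → χ = χ' := by
    intro χ χ' h1 h2
    apply AlgHom.toLinearMap_injective
    apply B.ext
    intro p
    simp only [AlgHom.toLinearMap_apply, hB, map_mul, map_pow, h1, h2]
  -- every character has the claimed form
  have hform : ∀ χ : R →ₐ[K] K, ∃ t : Fin n, χ g = q ^ (t : ℕ) ∧ χ x = 0 := by
    intro χ
    have hgu : χ g ≠ 0 := by
      intro h
      have h1 : χ (g ^ (m * n)) = 0 := by rw [map_pow, h, zero_pow h0mn.ne']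
      rw [hgo, map_one] at h1
      exact one_ne_zero h1
    have hx0 : χ x = 0 := by
      have h := congrArg χ hxg
      rw [map_mul, map_smul, map_mul, smul_eq_mul] at h
      have hq1 : q ≠ 1 := hq.ne_one hn
      by_contra hx
      have h' : 1 * (χ g * χ x) = q * (χ g * χ x) := by
        rw [one_mul, ← h, mul_comm (χ x) (χ g)]
      exact hq1 (mul_right_cancel₀ (mul_ne_zero hgu hx) h').symm
    have hgn : (χ g) ^ n = 1 := by
      have h := congrArg χ hxn
      rw [map_pow, map_sub, map_pow, map_one, hx0, zero_pow h0n.ne'] at h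
      exact sub_eq_zero.mp h.symm
    obtain ⟨i, hi, hqi⟩ := hq.eq_pow_of_pow_eq_one hgn
    exact ⟨⟨i, hi⟩, hqi.symm, hx0⟩
  -- convolution of algebra maps
  have hconv : ∀ F H : R →ₐ[K] K, ∃ C : R →ₐ[K] K,
      conv K F.toLinearMap H.toLinearMap = C.toLinearMap ∧
      C g = F g * H g ∧ C x = F x * H g + H x := by
    intro F H
    refine ⟨(Algebra.TensorProduct.lmul' K).comp
      ((Algebra.TensorProduct.map F H).comp (Bialgebra.comulAlgHom K R)), ?_, ?_, ?_⟩
    · have hmap : TensorProduct.map F.toLinearMap H.toLinearMap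
          = (Algebra.TensorProduct.map F H).toLinearMap := by
        apply TensorProduct.ext'
        intro a b
        rfl
      show conv K F.toLinearMap H.toLinearMap = _
      unfold conv
      rw [AlgHom.comp_toLinearMap, AlgHom.comp_toLinearMap,
        Algebra.TensorProduct.lmul'_toLinearMap, hmap]
      rfl
    · show Algebra.TensorProduct.lmul' K
        (Algebra.TensorProduct.map F H (Bialgebra.comulAlgHom K R g)) = _
      rw [Bialgebra.comulAlgHom_apply, hcg, Algebra.TensorProduct.map_tmul,
        Algebra.TensorProduct.lmul'_apply_tmul]
    · show Algebra.TensorProduct.lmul' K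
        (Algebra.TensorProduct.map F H (Bialgebra.comulAlgHom K R x)) = _
      rw [Bialgebra.comulAlgHom_apply, hcx, map_add, map_add, Algebra.TensorProduct.map_tmul,
        Algebra.TensorProduct.map_tmul, Algebra.TensorProduct.lmul'_apply_tmul,
        Algebra.TensorProduct.lmul'_apply_tmul, map_one, one_mul]
  obtain ⟨χ₁, hχ₁g, hχ₁x⟩ := hexists q hqn
  have hpow : ∀ t : ℕ, ∃ ψ : R →ₐ[K] K,
      ψ g = q ^ t ∧ ψ x = 0 ∧ convPow K χ₁.toLinearMap t = ψ.toLinearMap := by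
    intro t
    induction t with
    | zero =>
      refine ⟨Bialgebra.counitAlgHom K R, ?_, ?_, rfl⟩
      · simpa [Bialgebra.counitAlgHom_apply] using heg
      · simpa [Bialgebra.counitAlgHom_apply] using hex
    | succ t ih =>
      obtain ⟨ψ, hg', hx', hlin⟩ := ih
      obtain ⟨C, hC, hCg, hCx⟩ := hconv χ₁ ψ
      refine ⟨C, ?_, ?_, ?_⟩
      · rw [hCg, hχ₁g, hg', pow_succ, mul_comm]
      · rw [hCx, hχ₁x, hx', zero_mul, add_zero]
      · show conv K χ₁.toLinearMap (convPow K χ₁.toLinearMap t) = _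
        rw [hlin, hC]
  refine ⟨?_, hform, hdet, χ₁, hχ₁g, hχ₁x, ?_⟩
  · intro t
    refine hexists _ ?_
    rw [← pow_mul, mul_comm, pow_mul, hqn, one_pow]
  · intro χ
    obtain ⟨t, hgt, hxt⟩ := hform χ
    obtain ⟨ψ, hψg, hψx, hψlin⟩ := hpow (t : ℕ)
    have hcoe : ∀ F : R →ₐ[K] K, (F : R →ₗ[K] K) = F.toLinearMap := fun _ => rfl
    refine ⟨t, ?_, ?_⟩
    · have hχψ : χ = ψ := hdet χ ψ (by rw [hgt, hψg]) (by rw [hxt, hψx])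
      rw [hcoe, hχψ, hcoe, ← hψlin]
    · intro t' ht'
      obtain ⟨ψ', hψ'g, hψ'x, hψ'lin⟩ := hpow (t' : ℕ)
      rw [hcoe, hcoe, hψ'lin] at ht'
      have hχg' : χ g = q ^ (t' : ℕ) := by
        have h := congrArg (fun f : R →ₗ[K] K => f g) ht'
        simpa [hψ'g] using h
      exact Fin.ext (hq.pow_inj t'.isLt t.isLt (by rw [← hχg', hgt]))
end
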